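/- arXiv:2206.04266 — 5 statements merged into one kernel-verified Lean document; each statement's English description precedes it below -/
import Mathlib

section
/- Let obstacles be open axis-aligned hyperrectangles R_{a,b} = {x ∈ ℝ^d : ∀i, a_i < x_i < b_i}, and let O be the union of k such obstacles. For each coordinate i, let L^i be the finite set containing all values a^j_i, b^j_i over obstacles j (and the goal coordinate g_i). Define the surface S(x) of a point x coordinatewise: if x_i lies strictly between two consecutive elements L^i[j] < x_i < L^i[j+1], then S^i = [L^i[j], L^i[j+1]]; if x_i ∈ L^i then S^i = {x_i}; and S(x) = S^1 × ... × S^d. Then for any x ∈ ℝ^d with x ∉ O, the surface S(x) is disjoint from O. -/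
namespace Maze

/-- Points in `ℝ^d`. -/
abbrev PtR (d : ℕ) := Fin d → ℝ

/-- An open axis-aligned hyperrectangular obstacle determined by `a, b`. -/
def ObstR {d : ℕ} (a b : PtR d) : Set (PtR d) := {x | ∀ i, a i < x i ∧ x i < b i}

/-- The union of the `k` obstacles. -/
def OSetR {d k : ℕ} (a b : Fin k → PtR d) : Set (PtR d) := ⋃ j, ObstR (a j) (b j)

/-- The list of `i`-th coordinates of obstacle boundaries together with the goal coordinate. -/
noncomputable def ListsR {d k : ℕ} (a b : Fin k → PtR d) (g : PtR d) (i : Fin d) : Finset ℝ :=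
  (Finset.univ.image fun j => a j i) ∪ (Finset.univ.image fun j => b j i) ∪ {g i}

/-- The surface (closed grid cell) of a point `x` with respect to coordinate lists `L`:
`y` lies in the surface iff in every coordinate `i`, `y i` equals `x i` when `x i` is a
grid value, and otherwise `y i` lies between the grid values surrounding `x i`. -/
def SurfR {d : ℕ} (L : Fin d → Finset ℝ) (x : PtR d) : Set (PtR d) :=
  {y | ∀ i, (x i ∈ L i → y i = x i) ∧ (∀ l ∈ L i, l < x i → l ≤ y i) ∧
      (∀ l ∈ L i, x i < l → y i ≤ l)}

/-- if `x` is not in the obstacle set, then its surface is disjoint from the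
obstacle set. -/
theorem surface_disjoint_obstacles {d k : ℕ} (a b : Fin k → PtR d) (g : PtR d)
    (x : PtR d) (hx : x ∉ OSetR a b) :
    SurfR (ListsR a b g) x ∩ OSetR a b = ∅ := by
  ext y
  simp only [Set.mem_inter_iff, Set.mem_empty_iff_false, iff_false, not_and]
  intro hy hyO
  obtain ⟨j, hj⟩ := Set.mem_iUnion.mp hyO
  apply hx
  refine Set.mem_iUnion.mpr ⟨j, fun i => ?_⟩
  have haL : a j i ∈ ListsR a b g i := by
    simp [ListsR]
  have hbL : b j i ∈ ListsR a b g i := by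
    simp [ListsR]
  obtain ⟨hji1, hji2⟩ := hj i
  obtain ⟨h1, h2, h3⟩ := hy i
  constructor
  · by_contra hle
    push_neg at hle
    rcases lt_or_eq_of_le hle with hlt | heq
    · exact absurd (h3 _ haL hlt) (not_le.mpr hji1)
    · have := h1 (heq ▸ haL)
      linarith
  · by_contra hle
    push_neg at hle
    rcases lt_or_eq_of_le hle with hlt | heq
    · exact absurd (h2 _ hbL hlt) (not_le.mpr hji2)
    · have := h1 (heq ▸ hbL)
      linarith

end Maze
end

section
/- In the maze MDP on ℤ^d with unit-cost moves of ±1 in one coordinate, blocked by obstacles, the length of any path from s to s' is at least the Manhattan distance d(s,s') = Σ_i |s_i - s'_i|; moreover, if s' lies in the surface S(s) of s (and s ∉ O), then there exists a path from s to s' of length exactly d(s,s') avoiding all obstacles. -/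
open scoped BigOperators

namespace Maze

/-- Points of the `d`-dimensional integer maze. -/
abbrev Pt (d : ℕ) := Fin d → ℤ

/-- An open axis-aligned hyperrectangular obstacle determined by `a, b`. -/
def Obst {d : ℕ} (a b : Pt d) : Set (Pt d) := {x | ∀ i, a i < x i ∧ x i < b i}

/-- The union of the `k` obstacles. -/
def OSet {d k : ℕ} (a b : Fin k → Pt d) : Set (Pt d) := ⋃ j, Obst (a j) (b j)

/-- The list of `i`-th coordinates of obstacle boundaries together with the goal coordinate. -/
def Lists {d k : ℕ} (a b : Fin k → Pt d) (g : Pt d) (i : Fin d) : Finset ℤ :=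
  (Finset.univ.image fun j => a j i) ∪ (Finset.univ.image fun j => b j i) ∪ {g i}

/-- The surface (closed grid cell) of a point `x` with respect to coordinate lists `L`:
`y` lies in the surface iff in every coordinate `i`, `y i` equals `x i` when `x i` is a
grid value, and otherwise `y i` lies between the grid values surrounding `x i`. -/
def Surf {d : ℕ} (L : Fin d → Finset ℤ) (x : Pt d) : Set (Pt d) :=
  {y | ∀ i, (x i ∈ L i → y i = x i) ∧ (∀ l ∈ L i, l < x i → l ≤ y i) ∧
      (∀ l ∈ L i, x i < l → y i ≤ l)}

/-- Corners: points all of whose coordinates are grid values. -/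
def Corners {d : ℕ} (L : Fin d → Finset ℤ) : Set (Pt d) := {c | ∀ i, c i ∈ L i}

/-- Manhattan distance. -/
def manh {d : ℕ} (s t : Pt d) : ℕ := ∑ i, (s i - t i).natAbs

/-- A unit move in a single coordinate. -/
def Step {d : ℕ} (x y : Pt d) : Prop :=
  ∃ i, (y i = x i + 1 ∨ y i = x i - 1) ∧ ∀ j, j ≠ i → y j = x j

/-- A maze path of length `n` from `s` to `t` avoiding the obstacle set `O`. -/
def IsMazePath {d : ℕ} (O : Set (Pt d)) (f : ℕ → Pt d) (n : ℕ) (s t : Pt d) : Prop :=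
  f 0 = s ∧ f n = t ∧ (∀ m, m < n → Step (f m) (f (m + 1))) ∧ (∀ m, m ≤ n → f m ∉ O)

/-- Minimal number of steps of an obstacle-avoiding maze path from `s` to `t`
(`⊤` if there is none). -/
noncomputable def mazeDist {d : ℕ} (O : Set (Pt d)) (s t : Pt d) : ℕ∞ :=
  sInf {N : ℕ∞ | ∃ n : ℕ, N = n ∧ ∃ f, IsMazePath O f n s t}

/-- Two corners are adjacent if they agree in all coordinates except one, where their
values are consecutive elements of the corresponding list, and the axis-aligned segment
between them avoids the obstacles. -/
def Adjacent {d : ℕ} (L : Fin d → Finset ℤ) (O : Set (Pt d)) (c c' : Pt d) : Prop :=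
  c ∈ Corners L ∧ c' ∈ Corners L ∧
  ∃ i, c i ≠ c' i ∧ (∀ j, j ≠ i → c j = c' j) ∧
    (∀ l ∈ L i, ¬(min (c i) (c' i) < l ∧ l < max (c i) (c' i))) ∧
    (∀ z : Pt d, (∀ j, j ≠ i → z j = c j) →
      min (c i) (c' i) ≤ z i → z i ≤ max (c i) (c' i) → z ∉ O)

/-- Shortest-path distance from `s` to `t` in the weighted corner graph, with edges
between adjacent corners weighted by their Manhattan distance. -/
noncomputable def cornerDist {d : ℕ} (L : Fin d → Finset ℤ) (O : Set (Pt d))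
    (s t : Pt d) : ℕ∞ :=
  sInf {N : ℕ∞ | ∃ (n : ℕ) (c : ℕ → Pt d), c 0 = s ∧ c n = t ∧
    (∀ m, m < n → Adjacent L O (c m) (c (m + 1))) ∧
    N = ∑ m ∈ Finset.range n, (manh (c m) (c (m + 1)) : ℕ∞)}

lemma manh_step {d : ℕ} {x y : Pt d} (h : Step x y) : manh x y ≤ 1 := by
  obtain ⟨i, hi, hj⟩ := h
  have : manh x y = (x i - y i).natAbs := by
    unfold manh
    rw [Finset.sum_eq_single i]
    · intro j _ hne
      rw [hj j hne]; simp
    · simp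
  rw [this]
  rcases hi with h | h <;> rw [h] <;> simp

lemma manh_triangle {d : ℕ} (s u t : Pt d) : manh s t ≤ manh s u + manh u t := by
  unfold manh
  rw [← Finset.sum_add_distrib]
  apply Finset.sum_le_sum
  intro i _
  have : s i - t i = (s i - u i) + (u i - t i) := by ring
  rw [this]
  exact Int.natAbs_add_le _ _

lemma path_lb {d : ℕ} : ∀ (n : ℕ) (f : ℕ → Pt d),
    (∀ m, m < n → Step (f m) (f (m + 1))) → manh (f 0) (f n) ≤ n := by
  intro n
  induction n with
  | zero => intro f _; simp [manh]
  | succ n ih =>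
    intro f hf
    calc manh (f 0) (f (n+1)) ≤ manh (f 0) (f n) + manh (f n) (f (n+1)) :=
          manh_triangle _ _ _
      _ ≤ n + 1 := by
          have h1 := ih f (fun m hm => hf m (Nat.lt_succ_of_lt hm))
          have h2 := manh_step (hf n (Nat.lt_succ_self n))
          omega

lemma manh_eq_zero {d : ℕ} {s t : Pt d} (h : manh s t = 0) : s = t := by
  funext i
  unfold manh at h
  rw [Finset.sum_eq_zero_iff] at h
  have := h i (Finset.mem_univ i)
  omega

lemma box_path {d : ℕ} (O : Set (Pt d)) : ∀ (n : ℕ) (s s' : Pt d), manh s s' = n →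
    (∀ z : Pt d, (∀ i, min (s i) (s' i) ≤ z i ∧ z i ≤ max (s i) (s' i)) → z ∉ O) →
    ∃ f : ℕ → Pt d, IsMazePath O f n s s' := by
  intro n
  induction n with
  | zero =>
    intro s s' h hbox
    have hs : s = s' := manh_eq_zero h
    refine ⟨fun _ => s, rfl, hs.symm ▸ rfl, fun m hm => by omega, fun m _ => ?_⟩
    apply hbox
    intro i
    constructor <;> simp
  | succ n ih =>
    intro s s' h hbox
    have hne : ∃ i, s i ≠ s' i := by
      by_contra hc
      push_neg at hc
      have : s = s' := funext hc
      rw [this] at h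
      simp [manh] at h
    obtain ⟨i, hi⟩ := hne
    set δ : ℤ := if s i < s' i then 1 else -1 with hδ
    set s₁ : Pt d := Function.update s i (s i + δ) with hs₁
    have hs₁i : s₁ i = s i + δ := by simp [hs₁]
    have hs₁j : ∀ j, j ≠ i → s₁ j = s j := by
      intro j hj; simp [hs₁, Function.update_of_ne hj]
    have hδval : (s i < s' i ∧ δ = 1) ∨ (s' i < s i ∧ δ = -1) := by
      rw [hδ]
      rcases lt_or_gt_of_ne hi with h' | h' <;> simp [h', not_lt_of_gt h'] <;> omega
    have hbet : min (s i) (s' i) ≤ s₁ i ∧ s₁ i ≤ max (s i) (s' i) := by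
      rw [hs₁i]
      rcases hδval with ⟨h1, h2⟩ | ⟨h1, h2⟩ <;> rw [h2] <;> constructor <;>
        simp only [le_min_iff, min_le_iff, le_max_iff, max_le_iff] <;> omega
    have hnat : (s₁ i - s' i).natAbs + 1 = (s i - s' i).natAbs := by
      rw [hs₁i]
      rcases hδval with ⟨h1, h2⟩ | ⟨h1, h2⟩ <;> rw [h2] <;> omega
    have hm1 : manh s₁ s' = n := by
      have key : ∀ t : Pt d, manh t s' = (t i - s' i).natAbs +
          ∑ j ∈ Finset.univ.erase i, (t j - s' j).natAbs := by
        intro t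
        unfold manh
        exact (Finset.add_sum_erase _ _ (Finset.mem_univ i)).symm
      have h1 := key s₁
      have h2 := key s
      have heq : ∑ j ∈ Finset.univ.erase i, (s₁ j - s' j).natAbs =
          ∑ j ∈ Finset.univ.erase i, (s j - s' j).natAbs := by
        apply Finset.sum_congr rfl
        intro j hj
        rw [hs₁j j (Finset.ne_of_mem_erase hj)]
      rw [h2] at h
      rw [h1, heq]
      omega
    have hsub : ∀ z : Pt d, (∀ j, min (s₁ j) (s' j) ≤ z j ∧ z j ≤ max (s₁ j) (s' j)) →
        (∀ j, min (s j) (s' j) ≤ z j ∧ z j ≤ max (s j) (s' j)) := by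
      intro z hz j
      by_cases hji : j = i
      · subst hji
        have := hz j
        have h1 := hbet.1; have h2 := hbet.2
        constructor <;> [skip; skip] <;>
        · simp only [le_min_iff, min_le_iff, le_max_iff, max_le_iff] at *
          omega
      · have := hz j
        rw [hs₁j j hji] at this
        exact this
    obtain ⟨f, hf0, hfn, hfs, hfO⟩ := ih s₁ s' hm1 (fun z hz => hbox z (hsub z hz))
    refine ⟨fun m => if m = 0 then s else f (m - 1), by simp, by simp [hfn], ?_, ?_⟩
    · intro m hm
      match m with
      | 0 =>
        simp only [if_pos rfl, if_neg (Nat.one_ne_zero)]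
        simp only [Nat.sub_self]
        rw [hf0]
        refine ⟨i, ?_, hs₁j⟩
        rw [hs₁i]
        rcases hδval with ⟨h1, h2⟩ | ⟨h1, h2⟩ <;> rw [h2] <;> [left; right] <;> simp <;> ring
      | m + 1 =>
        simp only [Nat.succ_ne_zero, if_neg, Nat.add_sub_cancel]
        exact hfs m (by omega)
    · intro m _
      match m with
      | 0 =>
        simp only [if_pos rfl]
        apply hbox
        intro j; constructor <;> simp
      | m + 1 =>
        simp only [Nat.succ_ne_zero, if_neg, Nat.add_sub_cancel]
        exact hfO m (by omega)


lemma surf_box {d k : ℕ} (a b : Fin k → Pt d) (g s s' : Pt d)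
    (hsO : s ∉ OSet a b) (hsurf : s' ∈ Surf (Lists a b g) s) :
    ∀ z : Pt d, (∀ i, min (s i) (s' i) ≤ z i ∧ z i ≤ max (s i) (s' i)) → z ∉ OSet a b := by
  intro z hz hzO
  rw [OSet, Set.mem_iUnion] at hzO
  obtain ⟨j, hj⟩ := hzO
  apply hsO
  rw [OSet, Set.mem_iUnion]
  refine ⟨j, fun i => ?_⟩
  obtain ⟨hj1, hj2⟩ := hj i
  have ha : a j i ∈ Lists a b g i := by
    unfold Lists
    rw [Finset.mem_union, Finset.mem_union]
    exact Or.inl (Or.inl (Finset.mem_image_of_mem _ (Finset.mem_univ j)))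
  have hb : b j i ∈ Lists a b g i := by
    unfold Lists
    rw [Finset.mem_union, Finset.mem_union]
    exact Or.inl (Or.inr (Finset.mem_image_of_mem _ (Finset.mem_univ j)))
  obtain ⟨h1, h2, h3⟩ := hsurf i
  have hz1 : s i ≤ z i ∨ s' i ≤ z i := min_le_iff.mp (hz i).1
  have hz2 : z i ≤ s i ∨ z i ≤ s' i := le_max_iff.mp (hz i).2
  constructor
  · by_contra hc
    push_neg at hc
    rcases eq_or_lt_of_le hc with heq | hlt
    · have := h1 (heq ▸ ha)
      omega
    · have := h3 (a j i) ha hlt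
      omega
  · by_contra hc
    push_neg at hc
    rcases eq_or_lt_of_le hc with heq | hlt
    · have := h1 (heq.symm ▸ hb)
      omega
    · have := h2 (b j i) hb hlt
      omega


/-- any path (following unit moves) from `s` to `s'` has length at least the
Manhattan distance; and if `s ∉ O` and `s'` lies in the surface of `s`, there is an
obstacle-avoiding path of length exactly the Manhattan distance. -/
theorem path_ge_manhattan_and_direct_access {d k : ℕ} (a b : Fin k → Pt d) (g s s' : Pt d) :
    (∀ (n : ℕ) (f : ℕ → Pt d), f 0 = s → f n = s' →
        (∀ m, m < n → Step (f m) (f (m + 1))) → manh s s' ≤ n) ∧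
    (s ∉ OSet a b → s' ∈ Surf (Lists a b g) s →
        ∃ f : ℕ → Pt d, IsMazePath (OSet a b) f (manh s s') s s') := by
  constructor
  · intro n f h0 hn hs
    have := path_lb n f hs
    rw [h0, hn] at this
    exact this
  · intro hsO hsurf
    exact box_path (OSet a b) (manh s s') s s' rfl (surf_box a b g s s' hsO hsurf)


end Maze
end

section
/- Let M be the maze MDP on ℤ^d (unit cost per step, absorbing goal g, moves blocked by obstacles), and let M' be the finite MDP whose states are the corners C, whose actions move between adjacent corners c¹, c² with cost d(c¹,c²) = |c¹_i − c²_i| (the Manhattan distance). Then for every corner c ∈ C, the optimal value functions agree: V*_M(c) = V*_{M'}(c). -/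
open scoped BigOperators

namespace Maze

section Aux
variable {d k : ℕ}

lemma a_mem_lists (a b : Fin k → Pt d) (g : Pt d) (j : Fin k) (i : Fin d) :
    a j i ∈ Lists a b g i := by
  simp only [Lists, Finset.mem_union, Finset.mem_image, Finset.mem_univ, true_and]
  exact Or.inl (Or.inl ⟨j, rfl⟩)

lemma b_mem_lists (a b : Fin k → Pt d) (g : Pt d) (j : Fin k) (i : Fin d) :
    b j i ∈ Lists a b g i := by
  simp only [Lists, Finset.mem_union, Finset.mem_image, Finset.mem_univ, true_and]
  exact Or.inl (Or.inr ⟨j, rfl⟩)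

lemma g_mem_lists (a b : Fin k → Pt d) (g : Pt d) (i : Fin d) :
    g i ∈ Lists a b g i := by
  simp [Lists]

lemma surf_not_obst {a b : Fin k → Pt d} {g : Pt d} {x y : Pt d}
    (hx : x ∉ OSet a b) (hy : y ∈ Surf (Lists a b g) x) : y ∉ OSet a b := by
  intro hyO
  apply hx
  simp only [OSet, Set.mem_iUnion] at hyO ⊢
  obtain ⟨j, hj⟩ := hyO
  refine ⟨j, fun i => ?_⟩
  obtain ⟨h1, h2, h3⟩ := hy i
  obtain ⟨hja, hjb⟩ := hj i
  by_cases hxi : x i ∈ Lists a b g i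
  · rw [h1 hxi] at hja hjb; exact ⟨hja, hjb⟩
  constructor
  · rcases lt_trichotomy (a j i) (x i) with h | h | h
    · exact h
    · exact absurd (h ▸ a_mem_lists a b g j i) hxi
    · have := h3 _ (a_mem_lists a b g j i) h; omega
  · rcases lt_trichotomy (b j i) (x i) with h | h | h
    · have := h2 _ (b_mem_lists a b g j i) h; omega
    · exact absurd (h ▸ b_mem_lists a b g j i) hxi
    · exact h

lemma manh_split (i : Fin d) (x y : Pt d) :
    manh x y = (x i - y i).natAbs + ∑ j ∈ Finset.univ.erase i, (x j - y j).natAbs :=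
  (Finset.add_sum_erase _ _ (Finset.mem_univ i)).symm

lemma manh_eq_of_eq_off {x y : Pt d} (i : Fin d) (h : ∀ j, j ≠ i → x j = y j) :
    manh x y = (x i - y i).natAbs := by
  rw [manh_split i]
  have : ∑ j ∈ Finset.univ.erase i, (x j - y j).natAbs = 0 :=
    Finset.sum_eq_zero fun j hj => by rw [h j (Finset.ne_of_mem_erase hj)]; simp
  omega

lemma manh_triangle_s5 (x y z : Pt d) : manh x z ≤ manh x y + manh y z := by
  unfold manh
  rw [← Finset.sum_add_distrib]
  exact Finset.sum_le_sum fun j _ => by omega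

end Aux
section Aux2
variable {d : ℕ}

lemma maze_concat {O : Set (Pt d)} {f f' : ℕ → Pt d} {n m : ℕ} {s t u : Pt d}
    (h1 : IsMazePath O f n s t) (h2 : IsMazePath O f' m t u) :
    ∃ h, IsMazePath O h (n + m) s u := by
  obtain ⟨hf0, hfn, hfs, hfO⟩ := h1
  obtain ⟨hg0, hgm, hgs, hgO⟩ := h2
  refine ⟨fun j => if j < n then f j else f' (j - n), ?_, ?_, ?_, ?_⟩
  · rcases Nat.eq_zero_or_pos n with hn | hn
    · subst hn; simpa using hg0.trans (hfn ▸ hf0)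
    · simpa [hn] using hf0
  · have h1 : ¬ n + m < n := by omega
    have h2 : n + m - n = m := by omega
    simp [h1, h2, hgm]
  · intro j hj
    rcases lt_trichotomy (j + 1) n with h | h | h
    · have hjn : j < n := by omega
      simpa [hjn, h] using hfs j hjn
    · have hjn : j < n := by omega
      have he : f' (j + 1 - n) = f n := by
        rw [show j + 1 - n = 0 by omega, hg0, hfn]
      have hlt : ¬ j + 1 < n := by omega
      simp only [hjn, if_pos, hlt, if_neg, not_false_iff, he]
      have := hfs j hjn
      rw [show n = j + 1 by omega]
      simpa using this
    · have hjn : ¬ j < n := by omega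
      have hlt : ¬ j + 1 < n := by omega
      have he : j + 1 - n = (j - n) + 1 := by omega
      simp only [hjn, if_neg, hlt, not_false_iff, he]
      exact hgs (j - n) (by omega)
  · intro j hj
    by_cases hjn : j < n
    · simpa [hjn] using hfO j (le_of_lt hjn)
    · simpa [hjn] using hgO (j - n) (by omega)

lemma adjacent_maze {L : Fin d → Finset ℤ} {O : Set (Pt d)} {c c' : Pt d}
    (h : Adjacent L O c c') : ∃ f, IsMazePath O f (manh c c') c c' := by
  obtain ⟨hc, hc', i, hne, heq, hgap, hobs⟩ := h
  set w : ℕ := (c i - c' i).natAbs with hw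
  set δ : ℤ := if c i < c' i then 1 else -1 with hδdef
  have hwδ : (w : ℤ) * δ = c' i - c i := by
    rw [hw, hδdef]; split_ifs with h
    · rw [mul_one]; omega
    · rw [mul_neg_one]; omega
  have hmanh : manh c c' = w := manh_eq_of_eq_off i fun j hj => heq j hj
  set f : ℕ → Pt d := fun m => fun j => if j = i then c i + (min m w : ℕ) * δ else c j with hf
  have hfi : ∀ m, f m i = c i + (min m w : ℕ) * δ := fun m => by simp [hf]
  have hfj : ∀ m j, j ≠ i → f m j = c j := fun m j hj => by simp [hf, hj]
  have hbound : ∀ t : ℕ, t ≤ w →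
      min (c i) (c' i) ≤ c i + (t : ℤ) * δ ∧ c i + (t : ℤ) * δ ≤ max (c i) (c' i) := by
    intro t ht
    rw [hδdef]; split_ifs with h
    · rw [mul_one]
      have : (t : ℤ) ≤ (w : ℤ) := by exact_mod_cast ht
      have h2 : (w : ℤ) = c' i - c i := by
        have := hwδ; rw [hδdef, if_pos h, mul_one] at this; omega
      constructor <;> [skip; skip] <;> omega
    · rw [mul_neg_one]
      have : (t : ℤ) ≤ (w : ℤ) := by exact_mod_cast ht
      have h2 : (w : ℤ) = c i - c' i := by
        have := hwδ; rw [hδdef, if_neg h, mul_neg_one] at this; omega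
      constructor <;> omega
  have hnotO : ∀ m, f m ∉ O := by
    intro m
    refine hobs (f m) (fun j hj => hfj m j hj) ?_ ?_
    · rw [hfi]; exact (hbound _ (min_le_right m w)).1
    · rw [hfi]; exact (hbound _ (min_le_right m w)).2
  refine ⟨f, ?_, ?_, ?_, fun m _ => hnotO m⟩
  · funext j
    by_cases hj : j = i
    · subst hj; rw [hfi]; simp
    · exact hfj 0 j hj
  · rw [hmanh]
    funext j
    by_cases hj : j = i
    · subst hj; rw [hfi, min_self]
      have : c j + (w : ℤ) * δ = c' j := by rw [hwδ]; ring
      exact this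
    · rw [hfj w j hj]; exact heq j hj
  · rw [hmanh]
    intro m hm
    refine ⟨i, ?_, fun j hj => by rw [hfj, hfj] <;> exact hj⟩
    have hmin : ((min (m + 1) w : ℕ) : ℤ) = ((min m w : ℕ) : ℤ) + 1 := by
      have : min (m + 1) w = min m w + 1 := by omega
      rw [this]; push_cast; ring
    have hstep : f (m + 1) i = f m i + δ := by
      rw [hfi, hfi, hmin]; ring
    rw [hδdef] at hstep
    split_ifs at hstep with h
    · exact Or.inl hstep
    · exact Or.inr hstep

lemma corner_to_maze {L : Fin d → Finset ℤ} {O : Set (Pt d)} (n : ℕ) (cs : ℕ → Pt d)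
    (h0 : cs 0 ∉ O) (hadj : ∀ m, m < n → Adjacent L O (cs m) (cs (m + 1))) :
    ∃ f, IsMazePath O f (∑ m ∈ Finset.range n, manh (cs m) (cs (m + 1))) (cs 0) (cs n) := by
  induction n with
  | zero =>
    rw [Finset.sum_range_zero]
    exact ⟨fun _ => cs 0, rfl, rfl, fun m hm => absurd hm (by omega), fun m _ => h0⟩
  | succ n ih =>
    obtain ⟨f, hf⟩ := ih fun m hm => hadj m (by omega)
    obtain ⟨f2, hf2⟩ := adjacent_maze (hadj n (by omega))
    obtain ⟨h, hh⟩ := maze_concat hf hf2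
    rw [Finset.sum_range_succ]
    exact ⟨h, hh⟩

end Aux2
section Main
variable {d k : ℕ} (a b : Fin k → Pt d) (g : Pt d)

lemma maze_to_corner (n : ℕ) :
    ∀ (f : ℕ → Pt d) (s c0 : Pt d),
      IsMazePath (OSet a b) f n s g → (∀ i, c0 i ∈ Lists a b g i) →
      c0 ∈ Surf (Lists a b g) s →
      ∃ (m : ℕ) (cs : ℕ → Pt d), cs 0 = c0 ∧ cs m = g ∧
        (∀ p, p < m → Adjacent (Lists a b g) (OSet a b) (cs p) (cs (p + 1))) ∧
        (∑ p ∈ Finset.range m, manh (cs p) (cs (p + 1))) ≤ n + manh c0 s := by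
  induction n with
  | zero =>
    intro f s c0 hpath hcor hsurf
    simp only [Surf, Set.mem_setOf_eq] at hsurf
    obtain ⟨h0, hN, -, -⟩ := hpath
    have hsg : s = g := by rw [← h0, hN]
    have hc0 : c0 = g := by
      rw [hsg] at hsurf
      exact funext fun i => (hsurf i).1 (g_mem_lists a b g i)
    exact ⟨0, fun _ => c0, rfl, hc0, fun p hp => absurd hp (by omega), by simp⟩
  | succ n ih =>
    intro f s c0 hpath hcor hsurf
    simp only [Surf, Set.mem_setOf_eq] at hsurf
    obtain ⟨h0, hN, hstep, hO⟩ := hpath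
    set s' := f 1 with hs'def
    have htail : IsMazePath (OSet a b) (fun j => f (j + 1)) n s' g :=
      ⟨rfl, hN, fun m hm => hstep (m + 1) (by omega), fun m hm => hO (m + 1) (by omega)⟩
    have hstep0 : Step s s' := by
      have := hstep 0 (by omega); rwa [h0] at this
    obtain ⟨i, hδ, hoth⟩ := hstep0
    have hsO : s ∉ OSet a b := by have := hO 0 (by omega); rwa [h0] at this
    have hs'O : s' ∉ OSet a b := hO 1 (by omega)
    obtain ⟨ha1, ha2, ha3⟩ := hsurf i
    have hss' : manh s s' = 1 := by
      rw [manh_eq_of_eq_off i fun j hj => (hoth j hj).symm]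
      rcases hδ with h | h <;> omega
    by_cases hmove : s' i ∈ Lists a b g i ∧ c0 i ≠ s' i
    · -- corner moves in coordinate i to s' i
      obtain ⟨hmem, hne⟩ := hmove
      set c0' : Pt d := fun j => if j = i then s' i else c0 j with hc0'def
      have hc0'i : c0' i = s' i := by simp [hc0'def]
      have hc0'j : ∀ j, j ≠ i → c0' j = c0 j := fun j hj => by simp [hc0'def, hj]
      have hc0'cor : ∀ j, c0' j ∈ Lists a b g j := by
        intro j; by_cases hj : j = i
        · subst hj; rw [hc0'i]; exact hmem
        · rw [hc0'j j hj]; exact hcor j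
      -- c0 i lies between (inclusive) the relevant bounds
      have hbetween : (s' i = s i + 1 → c0 i ≤ s' i) ∧ (s' i = s i - 1 → s' i ≤ c0 i) := by
        constructor <;> intro hd
        · by_cases hsi : s i ∈ Lists a b g i
          · have := ha1 hsi; omega
          · exact ha3 _ hmem (by omega)
        · by_cases hsi : s i ∈ Lists a b g i
          · have := ha1 hsi; omega
          · exact ha2 _ hmem (by omega)
      have hadj : Adjacent (Lists a b g) (OSet a b) c0 c0' := by
        refine ⟨hcor, hc0'cor, i, by rw [hc0'i]; exact hne,
          fun j hj => (hc0'j j hj).symm, ?_, ?_⟩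
        · -- gap condition
          rw [hc0'i]
          rintro l hl ⟨hl1, hl2⟩
          by_cases hsi : s i ∈ Lists a b g i
          · have := ha1 hsi; rcases hδ with h | h <;> omega
          · have hlne : l ≠ s i := fun he => hsi (he ▸ hl)
            rcases hδ with h | h
            · have hub := hbetween.1 h
              have hlt : l < s i := by omega
              have := ha2 l hl hlt; omega
            · have hlb := hbetween.2 h
              have hlt : s i < l := by omega
              have := ha3 l hl hlt; omega
        · -- obstacle-freeness of the segment
          intro z hz hz1 hz2
          rw [hc0'i] at hz1 hz2
          rcases hδ with h | h
          · have hub := hbetween.1 h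
            have hz_ge : c0 i ≤ z i := by omega
            have hz_le : z i ≤ s' i := by omega
            by_cases hztop : z i = s' i
            · refine surf_not_obst (g := g) hs'O ?_
              simp only [Surf, Set.mem_setOf_eq]
              intro j; by_cases hj : j = i
              · subst hj
                exact ⟨fun _ => hztop, fun l hl hlt => by omega, fun l hl hlt => by omega⟩
              · rw [hz j hj, hoth j hj]; exact hsurf j
            · have hzsi : z i ≤ s i := by omega
              refine surf_not_obst (g := g) hsO ?_
              simp only [Surf, Set.mem_setOf_eq]
              intro j; by_cases hj : j = i
              · subst hj
                refine ⟨fun hsi => by have := ha1 hsi; omega, fun l hl hlt => ?_,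
                  fun l hl hlt => by omega⟩
                have := ha2 l hl hlt; omega
              · rw [hz j hj]; exact hsurf j
          · have hlb := hbetween.2 h
            have hz_le : z i ≤ c0 i := by omega
            have hz_ge : s' i ≤ z i := by omega
            by_cases hzbot : z i = s' i
            · refine surf_not_obst (g := g) hs'O ?_
              simp only [Surf, Set.mem_setOf_eq]
              intro j; by_cases hj : j = i
              · subst hj
                exact ⟨fun _ => hzbot, fun l hl hlt => by omega, fun l hl hlt => by omega⟩
              · rw [hz j hj, hoth j hj]; exact hsurf j
            · have hzsi : s i ≤ z i := by omega
              refine surf_not_obst (g := g) hsO ?_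
              simp only [Surf, Set.mem_setOf_eq]
              intro j; by_cases hj : j = i
              · subst hj
                refine ⟨fun hsi => by have := ha1 hsi; omega, fun l hl hlt => by omega,
                  fun l hl hlt => ?_⟩
                have := ha3 l hl hlt; omega
              · rw [hz j hj]; exact hsurf j
      have hsurf' : c0' ∈ Surf (Lists a b g) s' := by
        simp only [Surf, Set.mem_setOf_eq]
        intro j; by_cases hj : j = i
        · subst hj
          exact ⟨fun _ => hc0'i, fun l hl hlt => by rw [hc0'i]; omega,
            fun l hl hlt => by rw [hc0'i]; omega⟩
        · rw [hc0'j j hj, hoth j hj]; exact hsurf j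
      obtain ⟨m, cs, hcs0, hcsm, hcsadj, hcst⟩ := ih _ s' c0' htail hc0'cor hsurf'
      refine ⟨m + 1, fun p => if p = 0 then c0 else cs (p - 1), by simp, ?_, ?_, ?_⟩
      · simp
        exact hcsm
      · intro p hp
        cases p with
        | zero => simpa [hcs0] using hadj
        | succ q =>
          have e2 : q + 1 ≠ 0 := by omega
          have e3 : q + 1 + 1 ≠ 0 := by omega
          simp only [if_neg e2, if_neg e3, Nat.add_sub_cancel]
          exact hcsadj q (by omega)
      · -- cost bound
        have hsum : ∑ p ∈ Finset.range (m + 1),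
            manh ((fun p => if p = 0 then c0 else cs (p - 1)) p)
              ((fun p => if p = 0 then c0 else cs (p - 1)) (p + 1)) =
            manh c0 c0' + ∑ p ∈ Finset.range m, manh (cs p) (cs (p + 1)) := by
          rw [Finset.sum_range_succ', add_comm]
          have hfirst : manh (if (0:ℕ) = 0 then c0 else cs (0 - 1))
              (if (0:ℕ) + 1 = 0 then c0 else cs (0 + 1 - 1)) = manh c0 c0' := by
            norm_num [hcs0]
          have hrest : ∀ p ∈ Finset.range m,
              manh (if p + 1 = 0 then c0 else cs (p + 1 - 1))
                (if p + 1 + 1 = 0 then c0 else cs (p + 1 + 1 - 1)) =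
              manh (cs p) (cs (p + 1)) := by
            intro p hp
            have e2 : p + 1 ≠ 0 := by omega
            have e3 : p + 1 + 1 ≠ 0 := by omega
            simp only [if_neg e2, if_neg e3, Nat.add_sub_cancel]
          rw [Finset.sum_congr rfl hrest]
          norm_num [hcs0]
        rw [hsum]
        have hP : manh c0 c0' = (c0 i - s' i).natAbs := by
          rw [manh_eq_of_eq_off i fun j hj => (hc0'j j hj).symm, hc0'i]
        have hQ : manh c0' s' = ∑ j ∈ Finset.univ.erase i, (c0 j - s j).natAbs := by
          rw [manh_split i, hc0'i, sub_self, Int.natAbs_zero, zero_add]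
          apply Finset.sum_congr rfl
          intro j hj
          rw [hc0'j j (Finset.ne_of_mem_erase hj), hoth j (Finset.ne_of_mem_erase hj)]
        have hR : manh c0 s = (c0 i - s i).natAbs +
            ∑ j ∈ Finset.univ.erase i, (c0 j - s j).natAbs := manh_split i c0 s
        have hkey : (c0 i - s' i).natAbs ≤ 1 + (c0 i - s i).natAbs := by
          rcases hδ with h | h <;> omega
        omega
    · -- corner stays
      push_neg at hmove
      have hsurf' : c0 ∈ Surf (Lists a b g) s' := by
        simp only [Surf, Set.mem_setOf_eq]
        intro j; by_cases hj : j = i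
        · subst hj
          refine ⟨hmove, ?_, ?_⟩
          · intro l hl hls'
            rcases hδ with h | h
            · rcases eq_or_lt_of_le (show l ≤ s j by omega) with he | hlt
              · have := ha1 (he ▸ hl); omega
              · have := ha2 l hl hlt; omega
            · have := ha2 l hl (by omega); omega
          · intro l hl hls'
            rcases hδ with h | h
            · have := ha3 l hl (by omega); omega
            · rcases eq_or_lt_of_le (show s j ≤ l by omega) with he | hlt
              · have := ha1 (he ▸ hl); omega
              · have := ha3 l hl hlt; omega
        · rw [hoth j hj]; exact hsurf j
      obtain ⟨m, cs, hcs0, hcsm, hcsadj, hcst⟩ := ih _ s' c0 htail hcor hsurf'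
      have htri : manh c0 s' ≤ manh c0 s + manh s s' := manh_triangle_s5 c0 s s'
      exact ⟨m, cs, hcs0, hcsm, hcsadj, by omega⟩

end Main
/-- for every corner `c` (not inside an obstacle) the optimal value in the
maze MDP agrees with the optimal value in the corner MDP. -/
theorem corner_values_agree {d k : ℕ} (a b : Fin k → Pt d) (g : Pt d) (c : Pt d)
    (hc : c ∈ Corners (Lists a b g)) (hcO : c ∉ OSet a b) :
    mazeDist (OSet a b) c g = cornerDist (Lists a b g) (OSet a b) c g := by
  apply le_antisymm
  · -- every corner path gives a maze path of the same total cost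
    apply le_sInf
    rintro N ⟨n, cs, hcs0, hcsn, hadj, rfl⟩
    obtain ⟨f, hf⟩ := corner_to_maze n cs (by rw [hcs0]; exact hcO) hadj
    rw [hcs0, hcsn] at hf
    have h1 : mazeDist (OSet a b) c g ≤
        ((∑ m ∈ Finset.range n, manh (cs m) (cs (m + 1)) : ℕ) : ℕ∞) :=
      sInf_le ⟨_, rfl, f, hf⟩
    calc mazeDist (OSet a b) c g ≤ _ := h1
      _ = ∑ m ∈ Finset.range n, (manh (cs m) (cs (m + 1)) : ℕ∞) := by
        rw [Nat.cast_sum]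
  · -- every maze path gives a corner path of no larger total cost
    apply le_sInf
    rintro N ⟨n, rfl, f, hf⟩
    have hcs : c ∈ Surf (Lists a b g) c :=
      fun i => ⟨fun _ => rfl, fun l _ h => le_of_lt h, fun l _ h => le_of_lt h⟩
    obtain ⟨m, cs, h1, h2, h3, h4⟩ := maze_to_corner a b g n f c c hf (fun i => hc i) hcs
    have h5 : cornerDist (Lists a b g) (OSet a b) c g ≤
        ((∑ p ∈ Finset.range m, manh (cs p) (cs (p + 1)) : ℕ) : ℕ∞) :=
      sInf_le ⟨m, cs, h1, h2, h3, by rw [Nat.cast_sum]⟩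
    have h6 : (∑ p ∈ Finset.range m, manh (cs p) (cs (p + 1))) ≤ n := by
      have hcc : manh c c = 0 := by simp [manh]
      omega
    exact h5.trans (Nat.cast_le.mpr h6)

end Maze
end

section
/- With M the maze MDP and M' the corner MDP as above, for every state s ∈ ℤ^d not in an obstacle, the optimal value satisfies V*_M(s) = min over corners c in S(s) ∩ C of [d(s,c) + V*_{M'}(c)], where d is the Manhattan distance and S(s) is the surface of s. -/
open scoped BigOperators

namespace Maze

/-! Obstacle boundaries are grid lines, so the cell `Surf L s` of a free point is free, and `s`
reaches each corner `c` of its cell in `manh s c` steps; this gives `≤`. For `≥`, follow an optimal path backwards from the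
goal: if a step `s → s'` leaves the cell of `s`, then `s` lies on a grid line in the direction
of the step, and projecting a corner `c'` of the cell of `s'` onto that line gives a corner of
the cell of `s` adjacent to `c'`, at a total cost of one more step. -/

section Cell

/-- `y` lies in the one-dimensional grid cell of `x`: no grid value separates them, where
sitting on a grid value counts as being on both sides of it. -/
def InCell (L : Finset ℤ) (x y : ℤ) : Prop := ∀ l ∈ L, (l ≤ x → l ≤ y) ∧ (x ≤ l → y ≤ l)

variable {L : Finset ℤ} {x x' y : ℤ}

theorem inCell_self (L : Finset ℤ) (x : ℤ) : InCell L x x := fun _ _ => ⟨id, id⟩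

theorem InCell.of_mem_uIcc (hy : InCell L x y) {z : ℤ} (hz : z ∈ Set.uIcc x y) :
    InCell L x z := by
  rw [Set.mem_uIcc] at hz
  intro l hl
  have := hy l hl
  omega

theorem InCell.mem_Ioo (hy : InCell L x y) {l u : ℤ} (hl : l ∈ L) (hu : u ∈ L)
    (hly : l < y) (hyu : y < u) : l < x ∧ x < u := by
  have := hy l hl
  have := hy u hu
  omega

theorem InCell.step (hx : x' = x + 1 ∨ x' = x - 1) (hy : InCell L x' y) (hny : ¬InCell L x y) :
    x ∈ L ∧ (x - y).natAbs = (x' - y).natAbs + 1 ∧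
      (∀ l ∈ L, ¬(min x y < l ∧ l < max x y)) ∧
      ∀ z, min x y ≤ z → z ≤ max x y → z ≠ x → InCell L x' z := by
  obtain ⟨l₀, hl₀, hsep⟩ : ∃ l ∈ L, ¬((l ≤ x → l ≤ y) ∧ (x ≤ l → y ≤ l)) := by
    simpa [InCell] using hny
  have := hy l₀ hl₀
  have hl₀x : l₀ = x := by omega
  subst hl₀x
  refine ⟨hl₀, by omega, fun l hl => ?_, fun z hz₁ hz₂ hz l hl => ?_⟩
  all_goals have := hy l hl; omega

end Cell

variable {d : ℕ}

theorem mem_surf_iff {L : Fin d → Finset ℤ} {x y : Pt d} :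
    y ∈ Surf L x ↔ ∀ i, InCell (L i) (x i) (y i) := by
  refine forall_congr' fun i => ⟨fun ⟨h₁, h₂, h₃⟩ l hl => ?_, fun h => ⟨fun hx => ?_, ?_, ?_⟩⟩
  · rcases lt_trichotomy l (x i) with hlx | rfl | hlx
    · exact ⟨fun _ => h₂ l hl hlx, by omega⟩
    · simp [h₁ hl]
    · exact ⟨by omega, fun _ => h₃ l hl hlx⟩
  · have := h _ hx
    omega
  · exact fun l hl hlx => (h l hl).1 hlx.le
  · exact fun l hl hlx => (h l hl).2 hlx.le

theorem mem_uIcc_iff_forall {s t z : Pt d} :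
    z ∈ Set.uIcc s t ↔ ∀ i, z i ∈ Set.uIcc (s i) (t i) := by
  rw [← Set.pi_univ_uIcc, Set.mem_univ_pi]

theorem self_mem_surf (L : Fin d → Finset ℤ) (x : Pt d) : x ∈ Surf L x :=
  mem_surf_iff.2 fun _ => inCell_self _ _

theorem uIcc_subset_surf {L : Fin d → Finset ℤ} {x y : Pt d} (hy : y ∈ Surf L x) :
    Set.uIcc x y ⊆ Surf L x := fun _ hz =>
  mem_surf_iff.2 fun i => (mem_surf_iff.1 hy i).of_mem_uIcc (mem_uIcc_iff_forall.1 hz i)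

theorem mem_surf_of_eq_of_ne {L : Fin d → Finset ℤ} {x y x' z : Pt d} {i : Fin d}
    (hy : y ∈ Surf L x) (hx : ∀ j ≠ i, x' j = x j) (hz : ∀ j ≠ i, z j = y j)
    (hi : InCell (L i) (x' i) (z i)) : z ∈ Surf L x' :=
  mem_surf_iff.2 fun j => by
    rcases eq_or_ne j i with rfl | hj
    · exact hi
    · rw [hx j hj, hz j hj]
      exact mem_surf_iff.1 hy j

theorem notMem_OSet_of_mem_surf {k : ℕ} {L : Fin d → Finset ℤ} {a b : Fin k → Pt d}
    (ha : ∀ j i, a j i ∈ L i) (hb : ∀ j i, b j i ∈ L i) {s y : Pt d} (hs : s ∉ OSet a b)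
    (hy : y ∈ Surf L s) : y ∉ OSet a b := by
  simp only [OSet, Obst, Set.mem_iUnion, not_exists] at hs ⊢
  exact fun j hj => hs j fun i =>
    (mem_surf_iff.1 hy i).mem_Ioo (ha j i) (hb j i) (hj i).1 (hj i).2

theorem goal_mem_corners {k : ℕ} (a b : Fin k → Pt d) (g : Pt d) :
    g ∈ Corners (Lists a b g) := fun i => by simp [Lists]

section Manhattan

theorem manh_self (u : Pt d) : manh u u = 0 := by simp [manh]

theorem eq_of_manh_eq_zero {u v : Pt d} (h : manh u v = 0) : u = v := by
  funext i
  have := Finset.sum_eq_zero_iff.1 h i (Finset.mem_univ i)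
  omega

theorem manh_add_natAbs_eq {u v u' v' : Pt d} (i : Fin d)
    (h : ∀ j ≠ i, u j - v j = u' j - v' j) :
    manh u v + (u' i - v' i).natAbs = manh u' v' + (u i - v i).natAbs := by
  unfold manh
  rw [← Finset.add_sum_erase _ _ (Finset.mem_univ i),
    ← Finset.add_sum_erase _ _ (Finset.mem_univ i),
    Finset.sum_congr rfl fun j hj => by rw [h j (Finset.ne_of_mem_erase hj)]]
  ring

end Manhattan

section MazePaths

variable {O : Set (Pt d)} {m n : ℕ} {s s' t u : Pt d}

def MazeReach (O : Set (Pt d)) (n : ℕ) (s t : Pt d) : Prop := ∃ f, IsMazePath O f n s t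

theorem MazeReach.refl (hs : s ∉ O) : MazeReach O 0 s s :=
  ⟨fun _ => s, rfl, rfl, by simp, fun _ _ => hs⟩

theorem MazeReach.eq_of_zero (h : MazeReach O 0 s t) : s = t := by
  obtain ⟨f, h₀, h₁, -⟩ := h
  exact h₀.symm.trans h₁

theorem MazeReach.left_notMem (h : MazeReach O n s t) : s ∉ O := by
  obtain ⟨f, rfl, -, -, hf⟩ := h
  exact hf 0 n.zero_le

theorem MazeReach.right_notMem (h : MazeReach O n s t) : t ∉ O := by
  obtain ⟨f, -, rfl, -, hf⟩ := h
  exact hf n le_rfl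

theorem MazeReach.cons (hs : s ∉ O) (hss' : Step s s') (h : MazeReach O n s' t) :
    MazeReach O (n + 1) s t := by
  obtain ⟨f, h₀, hn, hstep, hfree⟩ := h
  refine ⟨fun | 0 => s | m + 1 => f m, rfl, hn, ?_, ?_⟩
  · rintro (_ | m) hm
    exacts [by simpa [h₀] using hss', hstep m (by omega)]
  · rintro (_ | m) hm
    exacts [hs, hfree m (by omega)]

theorem MazeReach.exists_step (h : MazeReach O (n + 1) s t) :
    ∃ s', s ∉ O ∧ Step s s' ∧ MazeReach O n s' t := by
  obtain ⟨f, rfl, hn, hstep, hfree⟩ := h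
  exact ⟨f 1, hfree 0 (by omega), hstep 0 (by omega),
    ⟨fun m => f (m + 1), rfl, hn, fun m hm => hstep (m + 1) (by omega),
      fun m hm => hfree (m + 1) (by omega)⟩⟩

theorem MazeReach.trans (h₁ : MazeReach O m s t) (h₂ : MazeReach O n t u) :
    MazeReach O (m + n) s u := by
  induction m generalizing s with
  | zero => simpa [h₁.eq_of_zero] using h₂
  | succ m ih =>
    obtain ⟨s', hs, hss', h'⟩ := h₁.exists_step
    rw [Nat.succ_add]
    exact (ih h').cons hs hss'

theorem mazeReach_of_uIcc (hO : ∀ z ∈ Set.uIcc s t, z ∉ O) : MazeReach O (manh s t) s t := by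
  induction h : manh s t generalizing s with
  | zero => exact eq_of_manh_eq_zero h ▸ MazeReach.refl (hO s Set.left_mem_uIcc)
  | succ n ih =>
    obtain ⟨i, hi⟩ : ∃ i, s i ≠ t i := by
      by_contra! hst
      rw [funext hst, manh_self] at h
      exact n.succ_ne_zero h.symm
    obtain ⟨x, hx, hxst, hxt⟩ : ∃ x, (x = s i + 1 ∨ x = s i - 1) ∧ x ∈ Set.uIcc (s i) (t i) ∧
        (x - t i).natAbs + 1 = (s i - t i).natAbs := by
      rcases lt_or_gt_of_ne hi with hlt | hgt
      · exact ⟨s i + 1, by omega, Set.mem_uIcc_of_le (by omega) (by omega), by omega⟩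
      · exact ⟨s i - 1, by omega, Set.mem_uIcc_of_ge (by omega) (by omega), by omega⟩
    have hoff : ∀ j ≠ i, Function.update s i x j = s j := fun j hj =>
      Function.update_of_ne hj _ _
    have hstep : Step s (Function.update s i x) := ⟨i, by simpa using hx, hoff⟩
    have hmem : Function.update s i x ∈ Set.uIcc s t := mem_uIcc_iff_forall.2 fun j => by
      rcases eq_or_ne j i with rfl | hj
      · simpa using hxst
      · simp [hoff j hj]
    have hman := manh_add_natAbs_eq (u := Function.update s i x) (v := t) (u' := s) (v' := t) i
      fun j hj => by rw [hoff j hj]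
    simp only [Function.update_self] at hman
    exact MazeReach.cons (hO s Set.left_mem_uIcc) hstep
      (ih (fun z hz => hO z (Set.uIcc_subset_uIcc_right hmem hz)) (by omega))

theorem mazeDist_le (h : MazeReach O n s t) : mazeDist O s t ≤ n := sInf_le ⟨n, rfl, h⟩

theorem mazeDist_le_add (h : MazeReach O m s t) :
    mazeDist O s u ≤ m + mazeDist O t u := by
  rw [mazeDist.eq_1 O t u, ENat.add_sInf]
  refine le_iInf₂ ?_
  rintro _ ⟨n, rfl, hn⟩
  exact_mod_cast mazeDist_le (h.trans hn)

end MazePaths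

section CornerPaths

variable {L : Fin d → Finset ℤ} {O : Set (Pt d)} {c c' t : Pt d}

theorem cornerDist_self (L : Fin d → Finset ℤ) (O : Set (Pt d)) (c : Pt d) :
    cornerDist L O c c = 0 :=
  nonpos_iff_eq_zero.1 <| sInf_le ⟨0, fun _ => c, rfl, rfl, by simp, by simp⟩

theorem cornerDist_le_add_of_adjacent (h : Adjacent L O c c') :
    cornerDist L O c t ≤ manh c c' + cornerDist L O c' t := by
  rw [cornerDist.eq_1 L O c' t, ENat.add_sInf]
  refine le_iInf₂ ?_
  rintro _ ⟨n, cp, h₀, hn, hadj, rfl⟩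
  refine sInf_le ⟨n + 1, fun | 0 => c | m + 1 => cp m, rfl, hn, ?_, ?_⟩
  · rintro (_ | m) hm
    exacts [by simpa [h₀] using h, hadj m (by omega)]
  · simp [Finset.sum_range_succ', h₀, add_comm]

theorem mazeReach_of_adjacent (h : Adjacent L O c c') : MazeReach O (manh c c') c c' := by
  obtain ⟨-, -, i, -, hoff, -, hseg⟩ := h
  refine mazeReach_of_uIcc fun z hz => ?_
  have hz' := mem_uIcc_iff_forall.1 hz
  simp only [Set.mem_uIcc] at hz'
  refine hseg z (fun j hj => ?_) ?_ ?_
  · have := hz' j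
    have := hoff j hj
    omega
  all_goals have := hz' i; omega

theorem mazeDist_le_cornerDist (hc : c ∉ O) : mazeDist O c t ≤ cornerDist L O c t := by
  refine le_sInf ?_
  rintro _ ⟨n, cp, h₀, hn, hadj, rfl⟩
  induction n generalizing c cp with
  | zero =>
    subst h₀ hn
    simpa using mazeDist_le (MazeReach.refl hc)
  | succ n ih =>
    have hr : MazeReach O (manh c (cp 1)) c (cp 1) := h₀ ▸ mazeReach_of_adjacent (hadj 0 n.succ_pos)
    calc mazeDist O c t ≤ manh c (cp 1) + mazeDist O (cp 1) t := mazeDist_le_add hr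
      _ ≤ manh c (cp 1) + ∑ m ∈ Finset.range n, (manh (cp (m + 1)) (cp (m + 1 + 1)) : ℕ∞) := by
        gcongr
        exact ih hr.right_notMem (fun m => cp (m + 1)) rfl hn fun m hm => hadj (m + 1) (by omega)
      _ = _ := by rw [Finset.sum_range_succ', h₀, add_comm]

end CornerPaths

section Transfer

variable {L : Fin d → Finset ℤ} {O : Set (Pt d)}

theorem exists_surf_corner_of_step (hO : ∀ ⦃s y⦄, s ∉ O → y ∈ Surf L s → y ∉ O)
    {s s' c' : Pt d} (hs : s ∉ O) (hs' : s' ∉ O) (hstep : Step s s') (hc' : c' ∈ Surf L s')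
    (hc'C : c' ∈ Corners L) :
    ∃ c ∈ Surf L s ∩ Corners L, manh s c + manh c c' ≤ manh s' c' + 1 ∧
      (c = c' ∨ Adjacent L O c c') := by
  obtain ⟨i, hi, hoff⟩ := hstep
  have hsc' := manh_add_natAbs_eq (u := s) (v := c') (u' := s') (v' := c') i
    fun j hj => by rw [hoff j hj]
  have hoff' : ∀ j ≠ i, s j = s' j := fun j hj => (hoff j hj).symm
  by_cases hcell : InCell (L i) (s i) (c' i)
  · refine ⟨c', ⟨mem_surf_of_eq_of_ne hc' hoff' (fun _ _ => rfl) hcell, hc'C⟩, ?_, Or.inl rfl⟩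
    rw [manh_self]
    omega
  obtain ⟨hsL, habs, hgap, hseg⟩ := InCell.step hi (mem_surf_iff.1 hc' i) hcell
  -- project `c'` onto the grid line through `s` in the direction of the step
  set c := Function.update c' i (s i)
  have hci : c i = s i := Function.update_self _ _ _
  have hcoff : ∀ j ≠ i, c j = c' j := fun j hj => Function.update_of_ne hj _ _
  have hsc := manh_add_natAbs_eq (u := s) (v := c) (u' := s') (v' := c') i
    fun j hj => by rw [hoff j hj, hcoff j hj]
  have hcc' := manh_add_natAbs_eq (u := c) (v := c') (u' := c') (v' := c') i
    fun j hj => by rw [hcoff j hj]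
  rw [manh_self, hci] at hcc'
  rw [hci] at hsc
  have hcC : c ∈ Corners L := fun j => by
    rcases eq_or_ne j i with rfl | hj
    exacts [hci ▸ hsL, hcoff j hj ▸ hc'C j]
  refine ⟨c, ⟨mem_surf_of_eq_of_ne hc' hoff' hcoff (hci ▸ inCell_self _ _), hcC⟩, by omega,
    Or.inr ⟨hcC, hc'C, i, by omega, hcoff, hci ▸ hgap, fun z hz hzmin hzmax => ?_⟩⟩
  have hzoff : ∀ j ≠ i, z j = c' j := fun j hj => (hz j hj).trans (hcoff j hj)
  rw [hci] at hzmin hzmax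
  by_cases hzi : z i = s i
  · exact hO hs (mem_surf_of_eq_of_ne hc' hoff' hzoff (hzi ▸ inCell_self _ _))
  · exact hO hs' (mem_surf_of_eq_of_ne hc' (fun _ _ => rfl) hzoff (hseg _ hzmin hzmax hzi))

theorem exists_surf_corner_of_mazeReach (hO : ∀ ⦃s y⦄, s ∉ O → y ∈ Surf L s → y ∉ O)
    {g : Pt d} (hg : g ∈ Corners L) {n : ℕ} {s : Pt d} (h : MazeReach O n s g) :
    ∃ c ∈ Surf L s ∩ Corners L, (manh s c : ℕ∞) + cornerDist L O c g ≤ n := by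
  induction n generalizing s with
  | zero =>
    obtain rfl := h.eq_of_zero
    exact ⟨s, ⟨self_mem_surf L s, hg⟩, by simp [manh_self, cornerDist_self]⟩
  | succ n ih =>
    obtain ⟨s', hs, hstep, h'⟩ := h.exists_step
    obtain ⟨c', ⟨hc'S, hc'C⟩, hc'⟩ := ih h'
    obtain ⟨c, hc, hman, hcc'⟩ :=
      exists_surf_corner_of_step hO hs h'.left_notMem hstep hc'S hc'C
    have hcd : cornerDist L O c g ≤ manh c c' + cornerDist L O c' g := by
      rcases hcc' with rfl | hadj
      · simp [manh_self]
      · exact cornerDist_le_add_of_adjacent hadj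
    refine ⟨c, hc, ?_⟩
    calc (manh s c : ℕ∞) + cornerDist L O c g
        ≤ ((manh s c + manh c c' : ℕ) : ℕ∞) + cornerDist L O c' g := by
          push_cast
          rw [add_assoc]
          gcongr
      _ ≤ ((manh s' c' + 1 : ℕ) : ℕ∞) + cornerDist L O c' g := by gcongr
      _ = (manh s' c' : ℕ∞) + cornerDist L O c' g + 1 := by push_cast; ring
      _ ≤ ((n + 1 : ℕ) : ℕ∞) := by push_cast; gcongr

theorem mazeDist_eq_iInf_surf_corners (hO : ∀ ⦃s y⦄, s ∉ O → y ∈ Surf L s → y ∉ O)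
    {g s : Pt d} (hg : g ∈ Corners L) (hs : s ∉ O) :
    mazeDist O s g = ⨅ c ∈ Surf L s ∩ Corners L, (manh s c : ℕ∞) + cornerDist L O c g := by
  apply le_antisymm
  · refine le_iInf₂ fun c hc => ?_
    have hsc : MazeReach O (manh s c) s c :=
      mazeReach_of_uIcc fun z hz => hO hs (uIcc_subset_surf hc.1 hz)
    calc mazeDist O s g ≤ manh s c + mazeDist O c g := mazeDist_le_add hsc
      _ ≤ manh s c + cornerDist L O c g := by gcongr; exact mazeDist_le_cornerDist hsc.right_notMem
  · refine le_sInf ?_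
    rintro _ ⟨n, rfl, hn⟩
    obtain ⟨c, hc, hle⟩ := exists_surf_corner_of_mazeReach hO hg hn
    exact (iInf₂_le c hc).trans hle

end Transfer

/-- for every state `s` not in an obstacle, the optimal maze value equals the
minimum over corners `c` in the surface of `s` of `d(s,c) + V*_{M'}(c)`. -/
theorem value_via_surface_corners {d k : ℕ} (a b : Fin k → Pt d) (g : Pt d) (s : Pt d)
    (hs : s ∉ OSet a b) :
    mazeDist (OSet a b) s g =
      ⨅ c ∈ Surf (Lists a b g) s ∩ Corners (Lists a b g),
        ((manh s c : ℕ∞) + cornerDist (Lists a b g) (OSet a b) c g) :=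
  mazeDist_eq_iInf_surf_corners
    (fun _ _ => notMem_OSet_of_mem_surf (fun j i => by simp [Lists]) (fun j i => by simp [Lists]))
    (goal_mem_corners a b g) hs

end Maze
end

section
/- Any trajectory in the corner MDP M' from a corner c to the goal g corresponds to a trajectory in the maze MDP M with the same total cost; consequently V*_M(c) ≤ V*_{M'}(c) for every corner c. -/
open scoped BigOperators

/-!
Each edge of the corner graph joins two corners that differ in a single coordinate and whose
connecting axis-parallel segment misses the obstacles, so walking along that segment one unit
at a time is a maze path whose length is the Manhattan distance of the corners. Concatenating
these walks turns a corner trajectory into a maze path of the same total cost, and taking the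
infimum over corner trajectories gives `mazeDist ≤ cornerDist`.
-/

namespace Maze

variable {d : ℕ} {O : Set (Pt d)}

lemma manh_eq_natAbs_of_forall_ne_eq {c c' : Pt d} {i : Fin d} (h : ∀ j, j ≠ i → c j = c' j) :
    manh c c' = (c i - c' i).natAbs :=
  Finset.sum_eq_single i (fun j _ hj => by simp [h j hj]) (by simp)

lemma isMazePath_const {s : Pt d} (hs : s ∉ O) : IsMazePath O (fun _ => s) 0 s s :=
  ⟨rfl, rfl, fun _ hm => absurd hm (Nat.not_lt_zero _), fun _ _ => hs⟩

lemma IsMazePath.append {f f' : ℕ → Pt d} {n n' : ℕ} {s t u : Pt d}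
    (hf : IsMazePath O f n s t) (hf' : IsMazePath O f' n' t u) :
    IsMazePath O (fun m => if m ≤ n then f m else f' (m - n)) (n + n') s u := by
  obtain ⟨hf0, hfn, hfstep, hfO⟩ := hf
  obtain ⟨hf'0, hf'n, hf'step, hf'O⟩ := hf'
  refine ⟨by simpa using hf0, ?_, fun m hm => ?_, fun m hm => ?_⟩
  · rcases Nat.eq_zero_or_pos n' with rfl | hn'
    · simpa [← hf'n, hf'0] using hfn
    · simpa [show ¬n + n' ≤ n by omega] using hf'n
  · by_cases hmn : m < n
    · simpa [hmn.le, show m + 1 ≤ n by omega] using hfstep m hmn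
    · have hstep := hf'step (m - n) (by omega)
      rw [show m - n + 1 = m + 1 - n by omega] at hstep
      rcases eq_or_lt_of_le (not_lt.mp hmn) with rfl | hlt
      · simpa [hfn, ← hf'0] using hstep
      · simpa [show ¬m ≤ n by omega, show ¬m + 1 ≤ n by omega] using hstep
  · by_cases hmn : m ≤ n
    · simpa [hmn] using hfO m hmn
    · simpa [hmn] using hf'O (m - n) (by omega)

/-- `Int.sign` gives the direction of the walk and also covers `c = c'`, where it is empty. -/
lemma exists_isMazePath_of_segment {c c' : Pt d} {i : Fin d} (hoff : ∀ j, j ≠ i → c j = c' j)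
    (havoid : ∀ z : Pt d, (∀ j, j ≠ i → z j = c j) →
      min (c i) (c' i) ≤ z i → z i ≤ max (c i) (c' i) → z ∉ O) :
    ∃ f, IsMazePath O f (manh c c') c c' := by
  set s := (c' i - c i).sign
  have hn : manh c c' = (c' i - c i).natAbs := by
    rw [manh_eq_natAbs_of_forall_ne_eq hoff, ← Int.natAbs_neg, neg_sub]
  have hs : s * (manh c c' : ℤ) = c' i - c i := by
    rw [hn]; exact Int.sign_mul_natAbs _
  have hsign : s = 1 ∨ s = 0 ∨ s = -1 := Int.sign_trichotomy _
  refine ⟨fun m => Function.update c i (c i + s * m), by simp, ?_, fun m hm => ?_, fun m hm => ?_⟩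
  · funext j
    by_cases hj : j = i
    · subst hj; simp [hs]
    · simp [hj, hoff j hj]
  · refine ⟨i, ?_, fun j hj => by simp [hj]⟩
    simp only [Function.update_self, Nat.cast_succ]
    rcases hsign with h | h | h <;> rw [h] at hs ⊢ <;> omega
  · refine havoid _ (fun j hj => by simp [hj]) ?_ ?_ <;>
      simp only [Function.update_self] <;>
      rcases hsign with h | h | h <;> rw [h] at hs ⊢ <;> omega

lemma exists_isMazePath_of_adjacent {L : Fin d → Finset ℤ} {c c' : Pt d}
    (h : Adjacent L O c c') : ∃ f, IsMazePath O f (manh c c') c c' :=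
  let ⟨_, _, _, _, hoff, _, havoid⟩ := h
  exists_isMazePath_of_segment hoff havoid

lemma exists_isMazePath_of_adjacent_chain {L : Fin d → Finset ℤ} (cs : ℕ → Pt d)
    (h0 : cs 0 ∉ O) (n : ℕ) (hadj : ∀ m, m < n → Adjacent L O (cs m) (cs (m + 1))) :
    ∃ f, IsMazePath O f (∑ m ∈ Finset.range n, manh (cs m) (cs (m + 1))) (cs 0) (cs n) := by
  induction n with
  | zero => exact ⟨_, isMazePath_const h0⟩
  | succ n ih =>
    obtain ⟨f, hf⟩ := ih fun m hm => hadj m (by omega)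
    obtain ⟨f', hf'⟩ := exists_isMazePath_of_adjacent (hadj n n.lt_succ_self)
    rw [Finset.sum_range_succ]
    exact ⟨_, hf.append hf'⟩

lemma mazeDist_le_of_isMazePath {f : ℕ → Pt d} {n : ℕ} {s t : Pt d}
    (hf : IsMazePath O f n s t) : mazeDist O s t ≤ n :=
  sInf_le ⟨n, rfl, f, hf⟩

theorem corner_trajectory_to_maze_trajectory_general {d k : ℕ} (a b : Fin k → Pt d) (g : Pt d)
    (c : Pt d) (hcO : c ∉ OSet a b) :
    (∀ (n : ℕ) (cs : ℕ → Pt d), cs 0 = c → cs n = g →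
      (∀ m, m < n → Adjacent (Lists a b g) (OSet a b) (cs m) (cs (m + 1))) →
      ∃ f : ℕ → Pt d,
        IsMazePath (OSet a b) f (∑ m ∈ Finset.range n, manh (cs m) (cs (m + 1))) c g) ∧
    mazeDist (OSet a b) c g ≤ cornerDist (Lists a b g) (OSet a b) c g := by
  refine ⟨fun n cs h0 hn hadj => ?_, le_sInf ?_⟩
  · subst h0 hn
    exact exists_isMazePath_of_adjacent_chain cs hcO n hadj
  · rintro _ ⟨n, cs, rfl, rfl, hadj, rfl⟩
    obtain ⟨f, hf⟩ := exists_isMazePath_of_adjacent_chain cs hcO n hadj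
    simpa using mazeDist_le_of_isMazePath hf

/-- any trajectory in the corner MDP from a corner `c` to the goal yields a
maze trajectory of the same total cost; consequently `V*_M(c) ≤ V*_{M'}(c)`. -/
theorem corner_trajectory_to_maze_trajectory {d k : ℕ} (a b : Fin k → Pt d) (g : Pt d)
    (c : Pt d) (hc : c ∈ Corners (Lists a b g)) (hcO : c ∉ OSet a b) :
    (∀ (n : ℕ) (cs : ℕ → Pt d), cs 0 = c → cs n = g →
      (∀ m, m < n → Adjacent (Lists a b g) (OSet a b) (cs m) (cs (m + 1))) →
      ∃ f : ℕ → Pt d,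
        IsMazePath (OSet a b) f (∑ m ∈ Finset.range n, manh (cs m) (cs (m + 1))) c g) ∧
    mazeDist (OSet a b) c g ≤ cornerDist (Lists a b g) (OSet a b) c g :=
  corner_trajectory_to_maze_trajectory_general a b g c hcO

end Maze
end
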